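/- arXiv:2404.12117 — 6 statements merged into one kernel-verified Lean document; each statement's English description precedes it below -/
import Mathlib

section
/- Let N be a positive integer and d a divisor of N. If |∑_{1 ≤ k < d} λ(k)λ(d−k)| < d − 1, then |∑_{1 ≤ n < N} λ(n)λ(N−n)| < N − 1. -/
open Finset

def lam (n : ℕ) : ℤ := (-1) ^ (ArithmeticFunction.cardFactors n)

noncomputable def Slam (p : ℕ) (ξ : ℕ) : ℂ :=
  ∑ n ∈ Finset.Ico 1 p, (lam n : ℂ) * Complex.exp (2 * Real.pi * Complex.I * (n * ξ) / p)

lemma lam_mul (m n : ℕ) (hm : m ≠ 0) (hn : n ≠ 0) : lam (m * n) = lam m * lam n := by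
  unfold lam
  rw [ArithmeticFunction.cardFactors_mul hm hn, pow_add]

lemma lam_sq (n : ℕ) : lam n * lam n = 1 := by
  unfold lam
  rw [← pow_add, Even.neg_one_pow ⟨_, rfl⟩]

lemma term_pm (m n : ℕ) : lam m * lam n = 1 ∨ lam m * lam n = -1 := by
  apply mul_self_eq_one_iff.mp
  have hm := lam_sq m
  have hn := lam_sq n
  nlinarith

theorem stmt_1 (N d : ℕ) (hN : 0 < N) (hd : d ∣ N)
    (h : |∑ k ∈ Finset.Ico 1 d, lam k * lam (d - k)| < (d : ℤ) - 1) :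
    |∑ n ∈ Finset.Ico 1 N, lam n * lam (N - n)| < (N : ℤ) - 1 := by
  have hd2 : 2 ≤ d := by
    by_contra hlt
    push_neg at hlt
    interval_cases d <;> simp at h
  obtain ⟨t, ht⟩ := hd
  have ht0 : 0 < t := by
    rcases Nat.eq_zero_or_pos t with h0 | h0
    · subst h0; simp at ht; omega
    · exact h0
  by_contra hcon
  push_neg at hcon
  have habs1 : ∀ m n : ℕ, |lam m * lam n| = 1 := by
    intro m n
    rcases term_pm m n with h1 | h1 <;> simp [h1]
  have hbound : |∑ n ∈ Finset.Ico 1 N, lam n * lam (N - n)| ≤ (N : ℤ) - 1 := by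
    calc |∑ n ∈ Finset.Ico 1 N, lam n * lam (N - n)|
        ≤ ∑ n ∈ Finset.Ico 1 N, |lam n * lam (N - n)| := abs_sum_le_sum_abs _ _
      _ = ∑ n ∈ Finset.Ico 1 N, (1 : ℤ) := by
          apply Finset.sum_congr rfl; intro n _; exact habs1 _ _
      _ = (N : ℤ) - 1 := by
          rw [Finset.sum_const, Nat.card_Ico, nsmul_eq_mul, mul_one]; omega
  have heq : |∑ n ∈ Finset.Ico 1 N, lam n * lam (N - n)| = (N : ℤ) - 1 :=
    le_antisymm hbound hcon
  have hNd : 2 ≤ N := by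
    have : d ≤ N := Nat.le_of_dvd hN ⟨t, ht⟩
    omega
  have hcard : ((Finset.Ico 1 N).card : ℤ) = (N : ℤ) - 1 := by
    rw [Nat.card_Ico]; omega
  have hcardd : ((Finset.Ico 1 d).card : ℤ) = (d : ℤ) - 1 := by
    rw [Nat.card_Ico]; omega
  have main : ∃ ε : ℤ, (ε = 1 ∨ ε = -1) ∧
      ∀ n ∈ Finset.Ico 1 N, lam n * lam (N - n) = ε := by
    rcases (abs_eq (by linarith : (0:ℤ) ≤ (N:ℤ) - 1)).mp heq with hs | hs
    · refine ⟨1, Or.inl rfl, ?_⟩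
      have hsum : ∑ n ∈ Finset.Ico 1 N, lam n * lam (N - n)
          = ∑ _n ∈ Finset.Ico 1 N, (1 : ℤ) := by
        rw [hs, Finset.sum_const, nsmul_eq_mul, mul_one, hcard]
      exact (Finset.sum_eq_sum_iff_of_le
        (fun n _ => by rcases term_pm n (N - n) with h1 | h1 <;> omega)).mp hsum
    · refine ⟨-1, Or.inr rfl, ?_⟩
      have hsum : ∑ _n ∈ Finset.Ico 1 N, (-1 : ℤ)
          = ∑ n ∈ Finset.Ico 1 N, lam n * lam (N - n) := by
        rw [hs, Finset.sum_const, nsmul_eq_mul, hcard]; ring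
      intro n hn
      exact ((Finset.sum_eq_sum_iff_of_le
        (fun n _ => by rcases term_pm n (N - n) with h1 | h1 <;> omega)).mp hsum n hn).symm
  obtain ⟨ε, hε, hall⟩ := main
  have key : ∀ k ∈ Finset.Ico 1 d, lam k * lam (d - k) = ε := by
    intro k hk
    rw [Finset.mem_Ico] at hk
    have hmem : k * t ∈ Finset.Ico 1 N := by
      rw [Finset.mem_Ico]
      refine ⟨Nat.one_le_iff_ne_zero.mpr (Nat.mul_ne_zero (by omega) (by omega)), ?_⟩
      rw [ht]
      exact (Nat.mul_lt_mul_right ht0).mpr hk.2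
    have hsub : N - k * t = (d - k) * t := by
      rw [ht, Nat.sub_mul]
    have hterm := hall _ hmem
    rw [hsub, lam_mul k t (by omega) (by omega),
      lam_mul (d - k) t (by omega) (by omega)] at hterm
    have hsq := lam_sq t
    linear_combination hterm - lam k * lam (d - k) * hsq
  have hsumd : ∑ k ∈ Finset.Ico 1 d, lam k * lam (d - k) = ((d : ℤ) - 1) * ε := by
    rw [Finset.sum_congr rfl key, Finset.sum_const, nsmul_eq_mul, hcardd]
  rw [hsumd] at h
  have habsd : |((d : ℤ) - 1)| = (d : ℤ) - 1 := abs_of_nonneg (by omega)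
  rcases hε with rfl | rfl <;>
    simp only [mul_one, mul_neg_one, abs_neg, habsd] at h <;> exact lt_irrefl _ h
end

section
/- Let p > 2 be prime with |∑_{1 ≤ n < p} λ(n)λ(p−n)| = p − 1. Then for every odd m with 1 ≤ m < p, λ(p+m) = λ(m). -/
open Finset

lemma lam_pm (n : ℕ) : lam n = 1 ∨ lam n = -1 := by
  unfold lam
  rcases Nat.even_or_odd (ArithmeticFunction.cardFactors n) with h | h
  · left; exact h.neg_one_pow
  · right; exact h.neg_one_pow

lemma lam_two_mul (k : ℕ) (hk : k ≠ 0) : lam (2 * k) = - lam k := by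
  unfold lam
  rw [ArithmeticFunction.cardFactors_mul two_ne_zero hk,
      ArithmeticFunction.cardFactors_apply_prime Nat.prime_two, pow_add]
  ring

theorem stmt_3 (p : ℕ) (hp : p.Prime) (hp2 : 2 < p)
    (h : |∑ n ∈ Finset.Ico 1 p, lam n * lam (p - n)| = (p : ℤ) - 1) :
    ∀ m, 1 ≤ m → m < p → Odd m → lam (p + m) = lam m := by
  have hbound : ∀ n ∈ Finset.Ico 1 p, lam n * lam (p - n) = 1 ∨ lam n * lam (p - n) = -1 := by
    intro n _
    rcases lam_pm n with h1 | h1 <;> rcases lam_pm (p - n) with h2 | h2 <;> simp [h1, h2]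
  have hcard : ((Finset.Ico 1 p).card : ℤ) = (p : ℤ) - 1 := by
    rw [Nat.card_Ico]; push_cast [Nat.le_of_lt hp2]; omega
  have hεex : ∃ ε : ℤ, ε * ε = 1 ∧ ∀ n ∈ Finset.Ico 1 p, lam n * lam (p - n) = ε := by
    rcases (abs_eq (by push_cast; omega)).mp h with hs | hs
    · refine ⟨1, by norm_num, ?_⟩
      have h0 : ∑ n ∈ Finset.Ico 1 p, (1 - lam n * lam (p - n)) = 0 := by
        rw [Finset.sum_sub_distrib, hs, Finset.sum_const, nsmul_eq_mul, hcard]; ring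
      intro n hn
      have := (Finset.sum_eq_zero_iff_of_nonneg
        (fun i hi => by rcases hbound i hi with h' | h' <;> simp [h'])).mp h0 n hn
      linarith
    · refine ⟨-1, by norm_num, ?_⟩
      have h0 : ∑ n ∈ Finset.Ico 1 p, (1 + lam n * lam (p - n)) = 0 := by
        rw [Finset.sum_add_distrib, hs, Finset.sum_const, nsmul_eq_mul, hcard]; ring
      intro n hn
      have := (Finset.sum_eq_zero_iff_of_nonneg
        (fun i hi => by rcases hbound i hi with h' | h' <;> simp [h'])).mp h0 n hn
      linarith
  obtain ⟨ε, hε, key⟩ := hεex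
  intro m hm1 hmp hmodd
  have hpodd : Odd p := hp.odd_of_ne_two (by omega)
  obtain ⟨k, hk⟩ := hpodd.add_odd hmodd
  obtain ⟨j, hj⟩ := Nat.Odd.sub_odd hpodd hmodd
  have hk0 : k ≠ 0 := by omega
  have hj0 : j ≠ 0 := by omega
  have h1 := key (p - m) (by simp [Finset.mem_Ico]; omega)
  rw [show p - (p - m) = m by omega] at h1
  have h2 := key k (by simp [Finset.mem_Ico]; omega)
  rw [show p - k = j by omega] at h2
  have h3 : lam (p - m) = - lam j := by
    rw [show p - m = 2 * j by omega, lam_two_mul j hj0]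
  have h4 : lam (p + m) = - lam k := by
    rw [show p + m = 2 * k by omega, lam_two_mul k hk0]
  rw [h3] at h1
  have hsq : lam j * lam j = 1 := by rcases lam_pm j with h' | h' <;> simp [h']
  rw [h4]
  linear_combination lam j * h1 - lam j * h2 + (lam k + lam m) * hsq
end

section
/- Let p > 3 be prime with |∑_{1 ≤ n < p} λ(n)λ(p−n)| = p − 1. Then for every m with 1 ≤ m < p and m ≡ p (mod 3), λ(2p+m) = λ(m). -/
open Finset

lemma lam_three : lam 3 = -1 := by
  unfold lam
  rw [ArithmeticFunction.cardFactors_apply_prime (by norm_num)]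
  ring

lemma all_same (s : Finset ℕ) (f : ℕ → ℤ) (hf : ∀ i ∈ s, f i = 1 ∨ f i = -1)
    (h : |∑ i ∈ s, f i| = (s.card : ℤ)) :
    (∀ i ∈ s, f i = 1) ∨ (∀ i ∈ s, f i = -1) := by
  rcases abs_eq (by positivity) |>.mp h with h1 | h1
  · left
    intro i hi
    have hz : ∑ j ∈ s, (1 - f j) = 0 := by
      rw [Finset.sum_sub_distrib, h1]; simp
    have := (Finset.sum_eq_zero_iff_of_nonneg (fun j hj => by
      rcases hf j hj with h | h <;> simp [h])).mp hz i hi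
    omega
  · right
    intro i hi
    have hz : ∑ j ∈ s, (f j + 1) = 0 := by
      rw [Finset.sum_add_distrib, h1]; simp
    have := (Finset.sum_eq_zero_iff_of_nonneg (fun j hj => by
      rcases hf j hj with h | h <;> simp [h])).mp hz i hi
    omega

theorem stmt_4 (p : ℕ) (hp : p.Prime) (hp3 : 3 < p)
    (h : |∑ n ∈ Finset.Ico 1 p, lam n * lam (p - n)| = (p : ℤ) - 1) :
    ∀ m, 1 ≤ m → m < p → m % 3 = p % 3 → lam (2 * p + m) = lam m := by
  -- extract a fixed sign ε with lam (p - n) = ε * lam n on Ico 1 p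
  have hcard : ((Finset.Ico 1 p).card : ℤ) = (p : ℤ) - 1 := by
    rw [Nat.card_Ico]
    have : 1 ≤ p := by omega
    push_cast [Nat.cast_sub this]
    ring
  have hdich := all_same (Finset.Ico 1 p) (fun n => lam n * lam (p - n))
    (fun i _ => by
      rcases lam_pm i with h1 | h1 <;> rcases lam_pm (p - i) with h2 | h2 <;>
        simp [h1, h2])
    (by rw [hcard]; exact h)
  obtain ⟨ε, hε2, hεpm, hε⟩ : ∃ ε : ℤ, ε * ε = 1 ∧ (ε = 1 ∨ ε = -1) ∧
      ∀ n ∈ Finset.Ico 1 p, lam (p - n) = ε * lam n := by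
    rcases hdich with hd | hd
    · exact ⟨1, by ring, Or.inl rfl, fun n hn => by
        have := hd n hn
        rcases lam_pm n with h1 | h1 <;> rcases lam_pm (p - n) with h2 | h2 <;>
          simp_all <;> omega⟩
    · exact ⟨-1, by ring, Or.inr rfl, fun n hn => by
        have := hd n hn
        rcases lam_pm n with h1 | h1 <;> rcases lam_pm (p - n) with h2 | h2 <;>
          simp_all <;> omega⟩
  intro m hm1 hmp hm3
  set k := (2 * p + m) / 3 with hk
  have h3k : 3 * k = 2 * p + m := by omega
  have hk1 : 1 ≤ k := by omega
  have hkp : k < p := by omega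
  have hpk : 3 * (p - k) = p - m := by omega
  have hpk1 : 1 ≤ p - k := by omega
  have e1 : lam (2 * p + m) = - lam k := by
    rw [← h3k, lam_mul 3 k (by norm_num) (by omega), lam_three]; ring
  have e2 : lam (p - m) = - lam (p - k) := by
    rw [← hpk, lam_mul 3 (p - k) (by norm_num) (by omega), lam_three]; ring
  have e3 : lam (p - k) = ε * lam k := hε k (Finset.mem_Ico.mpr ⟨hk1, hkp⟩)
  have e4 : lam (p - m) = ε * lam m := hε m (Finset.mem_Ico.mpr ⟨hm1, hmp⟩)
  have : ε * lam m = - (ε * lam k) := by rw [← e4, e2, e3]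
  have hlm : lam m = - lam k := by
    have := congrArg (ε * ·) this
    rw [← mul_assoc, hε2, one_mul] at this
    rw [this, show ε * -(ε * lam k) = -((ε * ε) * lam k) by ring, hε2, one_mul]
  rw [e1, hlm]
end

section
/- Let p > 2 be prime with |∑_{1 ≤ n < p} λ(n)λ(p−n)| = p − 1. Suppose 2 ≤ d < p is a primitive root mod p and S_λ(dξ) = λ(d)·S_λ(ξ) for all ξ mod p. Then λ(n) = χ_p(n) for all 1 ≤ n < p, where χ_p is the Legendre symbol mod p. -/
open Finset

lemma lam_one : lam 1 = 1 := by simp [lam]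

lemma lam_two : lam 2 = -1 := by
  simp [lam, ArithmeticFunction.cardFactors_apply_prime Nat.prime_two]

open Complex ZMod in
lemma bridge (p : ℕ) [NeZero p] (ξ : ℕ) :
    Slam p ξ = ∑ n ∈ Ico 1 p, (lam n : ℂ) *
      ZMod.stdAddChar ((n : ZMod p) * (ξ : ZMod p)) := by
  unfold Slam
  refine sum_congr rfl fun n _ => ?_
  have h1 : ((n : ZMod p) * (ξ : ZMod p)) = (((n * ξ : ℕ) : ℤ) : ZMod p) := by
    push_cast; ring
  rw [h1, ZMod.stdAddChar_coe]
  congr 1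
  push_cast
  ring

open Complex ZMod in
lemma sum_eq (p : ℕ) [Fact p.Prime] (c : ZMod p) :
    ∑ j : ZMod p, ZMod.stdAddChar (j * c) * (if j = 0 then (0:ℂ) else (lam j.val : ℂ))
      = ∑ n ∈ Ico 1 p, (lam n : ℂ) * ZMod.stdAddChar ((n : ZMod p) * c) := by
  have hp1 : 1 < p := (Fact.out : p.Prime).one_lt
  rw [← Finset.sum_erase_add _ _ (Finset.mem_univ (0 : ZMod p))]
  rw [if_pos rfl, mul_zero, add_zero]
  refine Finset.sum_nbij' (i := fun (x : ZMod p) => x.val) (j := fun (n : ℕ) => (n : ZMod p))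
    ?_ ?_ ?_ ?_ ?_
  · intro a ha
    have ha0 : a ≠ 0 := Finset.ne_of_mem_erase ha
    have : a.val ≠ 0 := fun h => ha0 (ZMod.val_eq_zero a |>.mp h)
    exact Finset.mem_Ico.mpr ⟨Nat.one_le_iff_ne_zero.mpr this, ZMod.val_lt a⟩
  · intro n hn
    obtain ⟨h1, h2⟩ := Finset.mem_Ico.mp hn
    refine Finset.mem_erase.mpr ⟨?_, Finset.mem_univ _⟩
    intro h
    have hv := ZMod.val_cast_of_lt h2
    rw [h, ZMod.val_zero] at hv
    omega
  · intro a _; simp [ZMod.natCast_val, ZMod.cast_id]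
  · intro n hn; exact ZMod.val_cast_of_lt (Finset.mem_Ico.mp hn).2
  · intro a ha
    have ha0 : a ≠ 0 := Finset.ne_of_mem_erase ha
    rw [if_neg ha0]
    rw [ZMod.natCast_val, ZMod.cast_id]
    ring

open Complex ZMod in
lemma step1 (p : ℕ) [Fact p.Prime] (d : ℕ) (hd0 : (d : ZMod p) ≠ 0)
    (hdil : ∀ ξ : ℕ, Slam p (d * ξ) = (lam d : ℂ) * Slam p ξ) :
    ∀ m : ZMod p, m ≠ 0 →
      (lam (((d : ZMod p) * m).val) : ℂ) = (lam d : ℂ) * lam m.val := by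
  set Φ₁ : ZMod p → ℂ :=
    fun j => if j = 0 then 0 else (lam ((j * (d : ZMod p)⁻¹).val) : ℂ) with hΦ₁
  set Φ₂ : ZMod p → ℂ :=
    fun j => (lam d : ℂ) * (if j = 0 then 0 else (lam j.val : ℂ)) with hΦ₂
  have hval : ∀ k : ZMod p, ((k.val : ℕ) : ZMod p) = k := by
    intro k; simp [ZMod.natCast_val, ZMod.cast_id]
  have hdft : ZMod.dft Φ₁ = ZMod.dft Φ₂ := by
    funext k
    rw [ZMod.dft_apply, ZMod.dft_apply]
    simp only [smul_eq_mul]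
    set c : ZMod p := -k with hc
    have harg : ∀ j : ZMod p, -(j * k) = j * c := fun j => by rw [hc]; ring
    -- LHS
    have hL : ∑ j : ZMod p, ZMod.stdAddChar (-(j * k)) * Φ₁ j = Slam p (d * c.val) := by
      have hre : ∑ j : ZMod p, ZMod.stdAddChar (-(j * k)) * Φ₁ j
          = ∑ i : ZMod p, ZMod.stdAddChar (((d : ZMod p) * i) * c) * Φ₁ ((d : ZMod p) * i) := by
        simp only [harg]
        conv_lhs => rw [← Equiv.sum_comp (Equiv.mulLeft₀ (d : ZMod p) hd0)
          (fun j => ZMod.stdAddChar (j * c) * Φ₁ j)]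
        simp only [Equiv.mulLeft₀_apply]
      rw [hre]
      have hterm : ∀ i : ZMod p,
          ZMod.stdAddChar (((d : ZMod p) * i) * c) * Φ₁ ((d : ZMod p) * i)
          = ZMod.stdAddChar (i * ((d : ZMod p) * c)) * (if i = 0 then 0 else (lam i.val : ℂ)) := by
        intro i
        have h1 : ((d : ZMod p) * i) * c = i * ((d : ZMod p) * c) := by ring
        have h3 : ((d : ZMod p) * i) * (d : ZMod p)⁻¹ = i := by field_simp
        have h2 : Φ₁ ((d : ZMod p) * i) = if i = 0 then 0 else (lam i.val : ℂ) := by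
          by_cases hi : i = 0
          · simp [hΦ₁, hi]
          · have hdi : (d : ZMod p) * i ≠ 0 := mul_ne_zero hd0 hi
            rw [hΦ₁]
            simp only [if_neg hdi, if_neg hi, h3]
        rw [h1, h2]
      rw [Finset.sum_congr rfl (fun i _ => hterm i), sum_eq p ((d : ZMod p) * c)]
      rw [bridge p (d * c.val)]
      refine Finset.sum_congr rfl fun n _ => ?_
      rw [show (((d * c.val : ℕ) : ZMod p)) = (d : ZMod p) * c by push_cast; rw [hval c]]
    -- RHS
    have hR : ∑ j : ZMod p, ZMod.stdAddChar (-(j * k)) * Φ₂ j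
        = (lam d : ℂ) * Slam p c.val := by
      have hstep : ∑ j : ZMod p, ZMod.stdAddChar (-(j * k)) * Φ₂ j
          = (lam d : ℂ) * ∑ j : ZMod p,
              ZMod.stdAddChar (j * c) * (if j = 0 then 0 else (lam j.val : ℂ)) := by
        rw [Finset.mul_sum]
        refine Finset.sum_congr rfl fun j _ => ?_
        simp only [harg j, hΦ₂]
        ring
      rw [hstep, sum_eq p c, bridge p c.val]
      congr 1
      refine Finset.sum_congr rfl fun n _ => ?_
      rw [hval c]
    rw [hL, hR, hdil c.val]
  have hΦeq : Φ₁ = Φ₂ := ZMod.dft.injective hdft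
  intro m hm
  have hdm : (d : ZMod p) * m ≠ 0 := mul_ne_zero hd0 hm
  have hthis := congrFun hΦeq ((d : ZMod p) * m)
  have h3 : ((d : ZMod p) * m) * (d : ZMod p)⁻¹ = m := by field_simp
  simp only [hΦ₁, hΦ₂, if_neg hdm, h3] at hthis
  have hsq : (lam d : ℂ) * (lam d : ℂ) = 1 := by
    exact_mod_cast congrArg (Int.cast : ℤ → ℂ) (lam_sq d)
  calc (lam (((d : ZMod p) * m).val) : ℂ)
      = ((lam d : ℂ) * (lam d : ℂ)) * (lam (((d : ZMod p) * m).val) : ℂ) := by rw [hsq]; ring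
    _ = (lam d : ℂ) * ((lam d : ℂ) * (lam (((d : ZMod p) * m).val) : ℂ)) := by ring
    _ = (lam d : ℂ) * (lam m.val : ℂ) := by rw [← hthis]

theorem stmt_11 (p : ℕ) [Fact p.Prime] (hp2 : 2 < p)
    (h : |∑ n ∈ Finset.Ico 1 p, lam n * lam (p - n)| = (p : ℤ) - 1)
    (d : ℕ) (hd2 : 2 ≤ d) (hdp : d < p)
    (hroot : IsPrimitiveRoot (d : ZMod p) (p - 1))
    (hdil : ∀ ξ : ℕ, Slam p (d * ξ) = (lam d : ℂ) * Slam p ξ) :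
    ∀ n, 1 ≤ n → n < p → lam n = legendreSym p n := by
  have hp : p.Prime := Fact.out
  have hp1 : 1 < p := hp.one_lt
  haveI : Fact (1 < p) := ⟨hp1⟩
  have hdval : ((d : ZMod p)).val = d := ZMod.val_cast_of_lt hdp
  have hd0 : (d : ZMod p) ≠ 0 := by
    intro hcc; rw [hcc, ZMod.val_zero] at hdval; omega
  have key : ∀ m : ZMod p, m ≠ 0 →
      lam (((d : ZMod p) * m).val) = lam d * lam m.val := by
    intro m hm
    exact_mod_cast step1 p d hd0 hdil m hm
  have hpow : ∀ k : ℕ, lam (((d : ZMod p) ^ k).val) = lam d ^ k := by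
    intro k; induction k with
    | zero => rw [pow_zero, ZMod.val_one, lam_one, pow_zero]
    | succ k ih =>
      have hne : (d : ZMod p) ^ k ≠ 0 := pow_ne_zero k hd0
      rw [pow_succ, mul_comm ((d : ZMod p) ^ k) _, key _ hne, ih, pow_succ]
      ring
  have hsurj : ∀ x : ZMod p, x ≠ 0 → ∃ k : ℕ, (d : ZMod p) ^ k = x := by
    intro x hx
    set u : (ZMod p)ˣ := Units.mk0 _ hd0 with hu
    have hord : orderOf u = p - 1 := by
      have h1 : orderOf ((u : ZMod p)) = p - 1 := hroot.eq_orderOf.symm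
      rwa [orderOf_units] at h1
    have hcard : Nat.card (ZMod p)ˣ = p - 1 := by
      rw [Nat.card_eq_fintype_card, ZMod.card_units_eq_totient, Nat.totient_prime hp]
    have htop : Subgroup.zpowers u = ⊤ :=
      Subgroup.eq_top_of_card_eq _ (by rw [Nat.card_zpowers, hord, hcard])
    have hmem : Units.mk0 x hx ∈ Submonoid.powers u := by
      rw [mem_powers_iff_mem_zpowers, htop]
      trivial
    obtain ⟨k, hk⟩ := (Submonoid.mem_powers_iff _ _).mp hmem
    refine ⟨k, ?_⟩
    have := congrArg (Units.val) hk
    simpa [hu] using this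
  have hld : lam d = -1 := by
    rcases Nat.even_or_odd (ArithmeticFunction.cardFactors d) with he | ho
    · exfalso
      have h1 : lam d = 1 := Even.neg_one_pow he
      have h2val : ((2 : ℕ) : ZMod p).val = 2 := ZMod.val_cast_of_lt hp2
      have h2v : ((2 : ℕ) : ZMod p) ≠ 0 := by
        intro hcc; rw [hcc, ZMod.val_zero] at h2val; omega
      obtain ⟨k, hk⟩ := hsurj ((2 : ℕ) : ZMod p) h2v
      have h5 := hpow k
      rw [hk, h1, one_pow, h2val, lam_two] at h5
      norm_num at h5
    · exact Odd.neg_one_pow ho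
  have hnsq : ¬ IsSquare (d : ZMod p) := by
    rintro ⟨r, hr⟩
    have hr0 : r ≠ 0 := by
      rintro rfl; rw [mul_zero] at hr; exact hd0 hr
    have heven : Even (p - 1) := Nat.Odd.sub_odd (hp.odd_of_ne_two (by omega)) odd_one
    have h1 : (d : ZMod p) ^ ((p - 1) / 2) = 1 := by
      rw [hr, ← sq, ← pow_mul, Nat.two_mul_div_two_of_even heven]
      exact ZMod.pow_card_sub_one_eq_one hr0
    have hdvd : (p - 1) ∣ (p - 1) / 2 := (hroot.pow_eq_one_iff_dvd _).mp h1
    have hlt : (p - 1) / 2 < p - 1 := Nat.div_lt_self (by omega) one_lt_two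
    have hpos : 0 < (p - 1) / 2 := Nat.div_pos (by omega) (by omega)
    exact absurd (Nat.le_of_dvd hpos hdvd) (by omega)
  have hcast : (((d : ℕ) : ℤ) : ZMod p) = (d : ZMod p) := by push_cast; rfl
  have hlegd : quadraticChar (ZMod p) ((d : ZMod p)) = -1 := by
    have hz : (((d : ℕ) : ℤ) : ZMod p) ≠ 0 := by rw [hcast]; exact hd0
    rcases legendreSym.eq_one_or_neg_one p hz with h1 | h1
    · exfalso
      have h2 := (legendreSym.eq_one_iff p hz).mp h1
      rw [hcast] at h2
      exact hnsq h2
    · rw [legendreSym] at h1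
      rwa [hcast] at h1
  have hlegpow : ∀ k : ℕ,
      legendreSym p ((((d : ZMod p) ^ k).val : ℕ) : ℤ) = (-1) ^ k := by
    intro k
    have hc : ((((((d : ZMod p) ^ k).val : ℕ)) : ℤ) : ZMod p) = (d : ZMod p) ^ k := by
      push_cast
      rw [ZMod.natCast_val, ZMod.cast_id]
    rw [legendreSym, hc, map_pow, hlegd]
  intro n h1n hnp
  have hnval : ((n : ℕ) : ZMod p).val = n := ZMod.val_cast_of_lt hnp
  have hnz : ((n : ℕ) : ZMod p) ≠ 0 := by
    intro hcc; rw [hcc, ZMod.val_zero] at hnval; omega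
  obtain ⟨k, hk⟩ := hsurj _ hnz
  have hvaln : ((d : ZMod p) ^ k).val = n := by rw [hk, hnval]
  have e1 : lam n = (-1) ^ k := by rw [← hvaln, hpow k, hld]
  have e2 : legendreSym p (n : ℤ) = (-1) ^ k := by
    rw [← hvaln]; exact hlegpow k
  rw [e1, e2]
end

section
/- Let p be prime and k ≥ 1, and suppose |∑_{1 ≤ n < p^k} λ(n)λ(p^k − n)| = p^k − 1. Then λ(n) = χ_p(n) for all 1 ≤ n < p^k with p ∤ n, where χ_p is the Legendre symbol mod p. -/
open Finset

lemma lam_mul_s12 {a b : ℕ} (ha : a ≠ 0) (hb : b ≠ 0) : lam (a * b) = lam a * lam b := by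
  unfold lam
  rw [ArithmeticFunction.cardFactors_mul ha hb, pow_add]

lemma lam_prime {q : ℕ} (hq : q.Prime) : lam q = -1 := by
  unfold lam
  rw [ArithmeticFunction.cardFactors_apply_prime hq, pow_one]

lemma mul_unit_cancel {a b c : ℤ} (ha : a = 1 ∨ a = -1) (h : a * b = a * c) : b = c := by
  rcases ha with rfl | rfl
  · simpa using h
  · simpa using h

def Rpow (p : ℕ) (ε : ℤ) (j : ℕ) : Prop :=
  ∀ m, 1 ≤ m → m < p ^ j → lam m * lam (p ^ j - m) = ε

section LevelOne
variable {p : ℕ} [hp : Fact p.Prime]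

lemma modpos {a : ℕ} (ha : ¬ p ∣ a) : 1 ≤ a % p := by
  rcases Nat.eq_zero_or_pos (a % p) with h | h
  · exact absurd (Nat.dvd_iff_mod_eq_zero.mpr h) ha
  · exact h

lemma ndvd {a : ℕ} (h1 : 1 ≤ a) (h2 : a < p) : ¬ p ∣ a := fun hd => by
  have := Nat.le_of_dvd (by omega) hd; omega

lemma ndvd_mul {a b : ℕ} (ha : ¬ p ∣ a) (hb : ¬ p ∣ b) : ¬ p ∣ a * b := by
  intro hd
  rcases (Nat.Prime.dvd_mul hp.out).mp hd with h | h <;> tauto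

lemma levelone (hodd : p ≠ 2) {ε : ℤ} (hε : ε = 1 ∨ ε = -1) (hR : Rpow p ε 1) :
    ∀ m, 1 ≤ m → m < p → lam m = legendreSym p m := by
  have hp2 : 2 ≤ p := hp.out.two_le
  have hp3 : 3 ≤ p := by
    rcases Nat.lt_or_ge p 3 with h | h
    · interval_cases p
      · exact absurd rfl hodd
    · exact h
  have hR' : ∀ m, 1 ≤ m → m < p → lam m * lam (p - m) = ε := by
    intro m h1 h2
    have := hR m h1 (by simpa using h2)
    simpa using this
  have hrefl : ∀ m, 1 ≤ m → m < p → lam (p - m) = ε * lam m := by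
    intro m h1 h2
    have h := hR' m h1 h2
    have hs := lam_sq m
    calc lam (p - m) = (lam m * lam m) * lam (p - m) := by rw [hs, one_mul]
    _ = lam m * (lam m * lam (p - m)) := by ring
    _ = lam m * ε := by rw [h]
    _ = ε * lam m := by ring
  -- the key multiplicativity mod p
  have hD : ∀ q, q < p → 1 ≤ q → ∀ m, 1 ≤ m → m < p →
      lam ((q * m) % p) = lam q * lam m := by
    intro q
    induction q using Nat.strong_induction_on with
    | _ q ihq =>
    intro hqp hq1 m
    induction m using Nat.strong_induction_on with
    | _ m ihm =>
    intro hm1 hmp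
    have hndq : ¬ p ∣ q := ndvd hq1 hqp
    have hndm : ¬ p ∣ m := ndvd hm1 hmp
    have hndqm : ¬ p ∣ q * m := ndvd_mul hndq hndm
    rcases eq_or_lt_of_le hq1 with hq1' | hq2
    · -- q = 1
      rw [← hq1']
      rw [one_mul, Nat.mod_eq_of_lt hmp, lam_one, one_mul]
    by_cases hqprime : q.Prime
    · -- q prime
      set u := (q * m) % p with hu
      have hu1 : 1 ≤ u := modpos hndqm
      have hup : u < p := Nat.mod_lt _ (by omega)
      rcases lt_trichotomy (q * m) p with hcase | hcase | hcase
      · rw [hu, Nat.mod_eq_of_lt hcase, lam_mul_s12 (by omega) (by omega)]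
      · exact absurd (hcase ▸ dvd_rfl) hndqm
      · rcases lt_trichotomy (2 * m) p with h2m | h2m | h2m
        · -- Case C : q*m > p, 2*m < p
          have hm2 : 2 ≤ m := by
            rcases Nat.lt_or_ge m 2 with h | h
            · interval_cases m <;> omega
            · exact h
          set r := p / m with hr
          set m' := p % m with hm'
          have hdm : m * r + m' = p := Nat.div_add_mod p m
          have hdm2 : r * m + m' = p := by rw [mul_comm] at hdm; exact hdm
          have hr2 : 2 ≤ r := by
            rw [hr, Nat.le_div_iff_mul_le (by omega)]
            omega
          have hrq : r < q := by
            rw [hr, Nat.div_lt_iff_lt_mul (by omega)]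
            omega
          have hm'0 : m' ≠ 0 := by
            intro h0
            have hdvd : m ∣ p := Nat.dvd_of_mod_eq_zero (by omega)
            rcases (Nat.Prime.eq_one_or_self_of_dvd hp.out m hdvd) with h | h <;> omega
          have hm'm : m' < m := Nat.mod_lt _ (by omega)
          have hrm : r * m < p := by
            have h := Nat.pos_of_ne_zero hm'0
            omega
          have hrm1 : 1 ≤ r * m := Nat.mul_pos (by omega) (by omega)
          have h1 : lam m' = ε * (lam r * lam m) := by
            have := hrefl (r * m) hrm1 hrm
            rw [show p - r * m = m' from by omega, lam_mul_s12 (by omega) (by omega)] at this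
            exact this
          have h2' : lam ((r * (p - u)) % p) = lam r * lam (p - u) :=
            ihq r hrq (by omega) (by omega) (p - u) (by omega) (by omega)
          have h3 : lam (p - u) = ε * lam u := hrefl u hu1 hup
          have h4 : lam ((q * m') % p) = lam q * lam m' :=
            ihm m' hm'm (by omega) (by omega)
          have h5 : (q * m') % p = (r * (p - u)) % p := by
            apply (ZMod.natCast_eq_natCast_iff' _ _ p).mp
            have e1 : ((m' : ℕ) : ZMod p) = -(((r : ℕ) : ZMod p) * m) := by
              have : ((m * r + m' : ℕ) : ZMod p) = ((p : ℕ) : ZMod p) := by rw [hdm]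
              push_cast at this
              rw [ZMod.natCast_self] at this
              linear_combination this
            have e2 : ((u : ℕ) : ZMod p) = (q : ZMod p) * m := by
              rw [hu, ZMod.natCast_mod]
              push_cast
              ring
            have e3 : (((p - u) : ℕ) : ZMod p) = -(u : ZMod p) := by
              have : (((p - u) + u : ℕ) : ZMod p) = ((p : ℕ) : ZMod p) := by
                rw [Nat.sub_add_cancel (le_of_lt hup)]
              push_cast at this
              rw [ZMod.natCast_self] at this
              linear_combination this
            push_cast
            rw [e1, e3, e2]
            ring
          -- combine
          have hcomb : lam q * (ε * (lam r * lam m)) = lam r * (ε * lam u) := by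
            rw [← h1, ← h4, h5, h2', h3]
          have hc2 : ε * (lam r * (lam q * lam m)) = ε * (lam r * lam u) := by
            linear_combination hcomb
          have := mul_unit_cancel hε hc2
          exact (mul_unit_cancel (lam_pm r) this).symm
        · -- 2*m = p impossible since p odd
          exfalso
          have : p ∣ 2 * m := ⟨1, by omega⟩
          rcases (Nat.Prime.dvd_mul hp.out).mp this with h | h
          · have := Nat.le_of_dvd (by omega) h; omega
          · tauto
        · -- Case B : 2*m > p, reflect
          set mb := p - m with hmb
          have hmb1 : 1 ≤ mb := by omega
          have hmbm : mb < m := by omega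
          have h4 : lam ((q * mb) % p) = lam q * lam mb :=
            ihm mb hmbm (by omega) (by omega)
          have h5 : (q * mb) % p = p - u := by
            rw [show p - u = (p - u) % p from (Nat.mod_eq_of_lt (by omega)).symm]
            apply (ZMod.natCast_eq_natCast_iff' _ _ p).mp
            have e2 : ((u : ℕ) : ZMod p) = (q : ZMod p) * m := by
              rw [hu, ZMod.natCast_mod]; push_cast; ring
            have e3 : (((p - u) : ℕ) : ZMod p) = -(u : ZMod p) := by
              have : (((p - u) + u : ℕ) : ZMod p) = ((p : ℕ) : ZMod p) := by
                rw [Nat.sub_add_cancel (le_of_lt hup)]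
              push_cast at this
              rw [ZMod.natCast_self] at this
              linear_combination this
            have e4 : ((mb : ℕ) : ZMod p) = -(m : ZMod p) := by
              have : ((mb + m : ℕ) : ZMod p) = ((p : ℕ) : ZMod p) := by
                rw [hmb, Nat.sub_add_cancel (le_of_lt hmp)]
              push_cast at this
              rw [ZMod.natCast_self] at this
              linear_combination this
            push_cast
            rw [e4, e3, e2]
            ring
          have h6 : lam (p - u) = ε * lam u := hrefl u hu1 hup
          have h7 : lam mb = ε * lam m := hrefl m hm1 hmp
          have hcomb : ε * lam u = ε * (lam q * lam m) := by
            rw [← h6, ← h5, h4, h7]; ring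
          exact mul_unit_cancel hε hcomb
    · -- q composite
      obtain ⟨a, hadvd, ha2, haq⟩ := Nat.exists_dvd_of_not_prime2 (by omega) hqprime
      obtain ⟨b, hb⟩ := hadvd
      have hb2 : 2 ≤ b := by
        rcases Nat.lt_or_ge b 2 with h | h
        · interval_cases b <;> omega
        · exact h
      have hbq : b < q := by nlinarith
      have hndb : ¬ p ∣ b := ndvd (by omega) (by omega)
      have hbm1 : 1 ≤ (b * m) % p := modpos (ndvd_mul hndb hndm)
      have hbmp : (b * m) % p < p := Nat.mod_lt _ (by omega)
      have key : (q * m) % p = (a * ((b * m) % p)) % p := by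
        rw [hb, mul_assoc, Nat.mul_mod a (b*m) p, Nat.mul_mod a ((b*m)%p) p,
          Nat.mod_mod_of_dvd _ dvd_rfl]
      rw [key, ihq a (by omega) (by omega) (by omega) _ hbm1 hbmp,
        ihq b hbq (by omega) (by omega) m hm1 hmp, hb,
        lam_mul_s12 (by omega) (by omega)]
      ring
  haveI : NeZero p := ⟨hp.out.ne_zero⟩
  -- squares have lam = 1
  have hSq : ∀ m, 1 ≤ m → m < p → IsSquare ((m : ℕ) : ZMod p) → lam m = 1 := by
    intro m h1 h2 hsq
    obtain ⟨x, hx⟩ := hsq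
    have hx0 : x ≠ 0 := by
      intro h0
      rw [h0, mul_zero] at hx
      exact (ndvd h1 h2) ((ZMod.natCast_eq_zero_iff m p).mp hx)
    have hA1 : 1 ≤ x.val := Nat.pos_of_ne_zero (fun h => hx0 ((ZMod.val_eq_zero x).mp h))
    have hAp : x.val < p := ZMod.val_lt x
    have hmm : m = (x.val * x.val) % p := by
      have hc : ((m : ℕ) : ZMod p) = ((x.val * x.val : ℕ) : ZMod p) := by
        push_cast
        rw [ZMod.natCast_rightInverse x, ← hx]
      have := (ZMod.natCast_eq_natCast_iff' _ _ p).mp hc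
      rwa [Nat.mod_eq_of_lt h2] at this
    rw [hmm, hD x.val hAp hA1 x.val hA1 hAp, lam_sq]
  intro m hm1 hmp
  have hm0 : ((m : ℕ) : ZMod p) ≠ 0 := by
    rw [Ne, ZMod.natCast_eq_zero_iff]
    exact ndvd hm1 hmp
  by_cases hsq : IsSquare ((m : ℕ) : ZMod p)
  · rw [hSq m hm1 hmp hsq]
    exact ((legendreSym.eq_one_iff' p hm0).mpr hsq).symm
  · have hleg : legendreSym p (m : ℕ) = -1 := (legendreSym.eq_neg_one_iff' p).mpr hsq
    rw [hleg]
    rcases lam_pm m with h | h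
    · exfalso
      have hall : ∀ n, 1 ≤ n → n < p → lam n = 1 := by
        intro n hn1 hnp
        have hn0 : ((n : ℕ) : ZMod p) ≠ 0 := by
          rw [Ne, ZMod.natCast_eq_zero_iff]
          exact ndvd hn1 hnp
        by_cases hsn : IsSquare ((n : ℕ) : ZMod p)
        · exact hSq n hn1 hnp hsn
        · have h1 : legendreSym p (n : ℕ) = -1 := (legendreSym.eq_neg_one_iff' p).mpr hsn
          have h3 : legendreSym p ((n * m : ℕ) : ℤ) = 1 := by
            push_cast
            rw [legendreSym.mul, h1, hleg]
            norm_num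
          have hnm0 : ((n * m : ℕ) : ZMod p) ≠ 0 := by
            rw [Ne, ZMod.natCast_eq_zero_iff]
            exact ndvd_mul (ndvd hn1 hnp) (ndvd hm1 hmp)
          have hprod : IsSquare (((n * m) % p : ℕ) : ZMod p) := by
            rw [ZMod.natCast_mod]
            exact (legendreSym.eq_one_iff' p hnm0).mp h3
          have e5 : lam ((n * m) % p) = 1 :=
            hSq _ (modpos (ndvd_mul (ndvd hn1 hnp) (ndvd hm1 hmp)))
              (Nat.mod_lt _ (by omega)) hprod
          rw [hD n hnp hn1 m hm1 hmp, h, mul_one] at e5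
          exact e5
      have h2' := hall 2 (by omega) (by omega)
      rw [lam_prime Nat.prime_two] at h2'
      norm_num at h2'
    · exact h

lemma levelone_eps (hodd : p ≠ 2) {ε : ℤ} (hε : ε = 1 ∨ ε = -1) (hR : Rpow p ε 1) :
    ε = legendreSym p (-1) := by
  have hp2 : 2 ≤ p := hp.out.two_le
  have h1 := hR 1 (by omega) (by simpa using (by omega : 1 < p))
  rw [pow_one] at h1
  rw [lam_one, one_mul] at h1
  have h2 := levelone hodd hε hR (p - 1) (by omega) (by omega)
  rw [h2] at h1
  rw [← h1]
  have : (((p - 1 : ℕ) : ℤ) : ZMod p) = ((-1 : ℤ) : ZMod p) := by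
    push_cast [Nat.cast_sub (by omega : 1 ≤ p)]
    rw [ZMod.natCast_self]
    ring
  rw [legendreSym.mod p ((p:ℕ) - 1 : ℕ), legendreSym.mod p (-1),
    (ZMod.intCast_eq_intCast_iff' _ _ p).mp this]

end LevelOne

lemma descend1 {p : ℕ} (hp : 2 ≤ p) {ε : ℤ} {j : ℕ} (h : Rpow p ε (j + 1)) :
    Rpow p ε j := by
  intro m h1 h2
  have hpm : 1 ≤ p * m := Nat.one_le_iff_ne_zero.mpr (Nat.mul_ne_zero (by omega) (by omega))
  have hlt : p * m < p ^ (j + 1) := by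
    rw [pow_succ, mul_comm (p ^ j) p]
    exact Nat.mul_lt_mul_of_le_of_lt (le_refl p) h2 (by omega)
  have key := h (p * m) hpm hlt
  have hsub : p ^ (j + 1) - p * m = p * (p ^ j - m) := by
    rw [Nat.mul_sub]
    congr 1
    rw [pow_succ, mul_comm]
  rw [hsub, lam_mul_s12 (by omega) (by omega), lam_mul_s12 (by omega) (by omega)] at key
  have : (lam p * lam p) * (lam m * lam (p ^ j - m)) = ε := by linear_combination key
  rwa [lam_sq, one_mul] at this

lemma descend_add {p : ℕ} (hp : 2 ≤ p) {ε : ℤ} (d : ℕ) :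
    ∀ i, Rpow p ε (i + d) → Rpow p ε i := by
  induction d with
  | zero => exact fun i h => h
  | succ n ih =>
      intro i h
      exact ih i (descend1 hp (by rwa [Nat.add_succ] at h))

section Engine
variable {p : ℕ} [hp : Fact p.Prime]

lemma engine (k : ℕ) (hk : 1 ≤ k) {ε : ℤ} (hε : ε = 1 ∨ ε = -1)
    (hR : Rpow p ε k) :
    ∀ n, 1 ≤ n → n < p ^ k → ¬ p ∣ n → lam n = legendreSym p n := by
  have hp2 : 2 ≤ p := hp.out.two_le
  have hRall : ∀ j, 1 ≤ j → j ≤ k → Rpow p ε j := by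
    intro j hj1 hjk
    exact descend_add hp2 (k - j) j (by rw [show j + (k - j) = k from by omega]; exact hR)
  by_cases hodd : p = 2
  · subst hodd
    rcases Nat.lt_or_ge k 2 with hk2 | hk2
    · have hk1 : k = 1 := by omega
      subst hk1
      intro n hn1 hn2 hnd
      have hn : n = 1 := by simpa using (by omega : n = 1)
      subst hn
      rw [lam_one, Nat.cast_one, legendreSym.at_one]
    · exfalso
      have hR2 := hRall 2 (by omega) hk2
      have e1 := hR2 1 (by omega) (by norm_num)
      have e2 := hR2 2 (by omega) (by norm_num)
      rw [show (2:ℕ)^2 - 1 = 3 from rfl] at e1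
      rw [show (2:ℕ)^2 - 2 = 2 from rfl] at e2
      rw [lam_one, one_mul, lam_prime (by norm_num : Nat.Prime 3)] at e1
      rw [lam_sq] at e2
      omega
  · -- p odd
    have hL1 := levelone hodd hε (hRall 1 (by omega) hk)
    have hEps := levelone_eps hodd hε (hRall 1 (by omega) hk)
    have hp3 : 3 ≤ p := by
      have := hp.out.two_le
      rcases Nat.lt_or_ge p 3 with hc | hc
      · interval_cases p
        · exact absurd rfl hodd
      · exact hc
    intro n
    induction n using Nat.strong_induction_on with
    | _ n ihn =>
    intro hn1 hnk hnd
    rcases eq_or_lt_of_le hn1 with h1 | h1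
    · rw [← h1, lam_one, Nat.cast_one, legendreSym.at_one]
    by_cases hnprime : n.Prime
    · rcases Nat.lt_or_ge n p with hnp | hnp
      · exact hL1 n hn1 hnp
      · -- n ≥ p, n prime, p ∤ n
        have hplt : 1 < p := by omega
        set j := Nat.log p n + 1 with hj
        have hnj : n < p ^ j := Nat.lt_pow_succ_log_self hplt n
        have hlow : p ^ (j - 1) ≤ n := by
          rw [hj]
          simpa using Nat.pow_log_le_self p (by omega)
        have hlog1 : 1 ≤ Nat.log p n := by
          rw [Nat.one_le_iff_ne_zero]
          intro h0
          rw [Nat.log_eq_zero_iff] at h0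
          omega
        have hj2 : 2 ≤ j := by omega
        have hlow' : p ^ (j - 1) < n := by
          rcases eq_or_lt_of_le hlow with hc | hc
          · exfalso
            apply hnd
            rw [← hc]
            exact dvd_pow_self p (by omega)
          · exact hc
        have hjk : j ≤ k := by
          have h1' : p ^ (j - 1) < p ^ k := lt_of_le_of_lt hlow hnk
          have := (Nat.pow_lt_pow_iff_right hplt).mp h1'
          omega
        have hRj := hRall j (by omega) hjk
        set t := p ^ j / n with ht
        set z := p ^ j % n with hz
        have hdm : n * t + z = p ^ j := Nat.div_add_mod _ _
        have hdm2 : t * n + z = p ^ j := by rw [mul_comm] at hdm; exact hdm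
        have ht1 : 1 ≤ t := (Nat.one_le_div_iff (by omega)).mpr (le_of_lt hnj)
        have htp : t < p := by
          rw [ht, Nat.div_lt_iff_lt_mul (by omega)]
          have hpj : p ^ j = p * p ^ (j - 1) := by
            conv_lhs => rw [show j = (j - 1) + 1 from by omega]
            rw [pow_succ, mul_comm]
          rw [hpj]
          exact Nat.mul_lt_mul_of_le_of_lt (le_refl p) hlow' (by omega)
        have hz1 : 1 ≤ z := by
          rcases Nat.eq_zero_or_pos z with h0 | h0
          · exfalso
            have hd1 : n ∣ p ^ j := Nat.dvd_of_mod_eq_zero h0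
            have hd2 := Nat.Prime.dvd_of_dvd_pow hnprime hd1
            have hd3 := (Nat.prime_dvd_prime_iff_eq hnprime hp.out).mp hd2
            exact hnd (by rw [hd3])
          · exact h0
        have hzn : z < n := Nat.mod_lt _ (by omega)
        have hndt : ¬ p ∣ t := ndvd ht1 htp
        have hndz : ¬ p ∣ z := by
          intro hdz
          have hppj : p ∣ p ^ j := dvd_pow_self p (by omega)
          have hsub : p ^ j - z = n * t := by omega
          have : p ∣ n * t := by
            rw [← hsub]
            exact Nat.dvd_sub hppj hdz
          rcases (Nat.Prime.dvd_mul hp.out).mp this with hc | hc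
          · exact hnd hc
          · exact hndt hc
        have htm1 : 1 ≤ t * n := Nat.mul_pos (by omega) (by omega)
        have htmj : t * n < p ^ j := by omega
        have hrel := hRj (t * n) htm1 htmj
        rw [show p ^ j - t * n = z from by omega,
          lam_mul_s12 (by omega) (by omega)] at hrel
        -- hrel : lam t * lam n * lam z = ε
        have htn : t < n := lt_of_lt_of_le htp
          (le_trans (Nat.le_self_pow (by omega) p) (le_of_lt hlow'))
        have hLt : lam t = legendreSym p t :=
          ihn t htn ht1 (lt_of_lt_of_le htp (Nat.le_self_pow (by omega) p)) hndt
        have hLz : lam z = legendreSym p z :=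
          ihn z hzn hz1 (by omega) hndz
        -- congruence: z ≡ -1 * t * n mod p
        have hcast : ((z : ℤ) : ZMod p) = (((-1) * t * n : ℤ) : ZMod p) := by
          have e : ((n * t + z : ℕ) : ZMod p) = ((p ^ j : ℕ) : ZMod p) := by rw [hdm]
          push_cast at e
          rw [ZMod.natCast_self, zero_pow (by omega : j ≠ 0)] at e
          push_cast
          linear_combination e
        have hchi : legendreSym p (z : ℕ) =
            legendreSym p (-1) * legendreSym p (t : ℕ) * legendreSym p (n : ℕ) := by
          rw [legendreSym.mod p ((z : ℕ) : ℤ), (ZMod.intCast_eq_intCast_iff' _ _ p).mp hcast,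
            ← legendreSym.mod p ((-1) * (t:ℕ) * (n:ℕ) : ℤ), legendreSym.mul, legendreSym.mul]
        -- collect and solve
        rw [hLt, hLz, hchi, hEps] at hrel
        have ct : ((t : ℤ) : ZMod p) ≠ 0 := by
          push_cast
          rw [Ne, ZMod.natCast_eq_zero_iff]
          exact hndt
        have cn : ((n : ℤ) : ZMod p) ≠ 0 := by
          push_cast
          rw [Ne, ZMod.natCast_eq_zero_iff]
          exact hnd
        have cm1 : (((-1) : ℤ) : ZMod p) ≠ 0 := by
          simp only [Int.cast_neg, Int.cast_one, Ne, neg_eq_zero]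
          exact one_ne_zero
        rcases legendreSym.eq_one_or_neg_one p ct with c1 | c1 <;>
          rcases legendreSym.eq_one_or_neg_one p cn with c2 | c2 <;>
          rcases legendreSym.eq_one_or_neg_one p cm1 with c3 | c3 <;>
          rw [c1, c2, c3] at hrel <;>
          rw [c2] <;> linarith [hrel]
    · -- composite
      obtain ⟨a, hadvd, ha2, han⟩ := Nat.exists_dvd_of_not_prime2 (by omega) hnprime
      obtain ⟨b, hb⟩ := hadvd
      have hb2 : 2 ≤ b := by
        rcases Nat.lt_or_ge b 2 with hc | hc
        · interval_cases b <;> omega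
        · exact hc
      have hbn : b < n := by nlinarith
      have hnda : ¬ p ∣ a := fun hd => hnd (hd.trans ⟨b, hb⟩)
      have hndb : ¬ p ∣ b := fun hd => hnd (hd.trans ⟨a, by rw [hb]; ring⟩)
      have hLa : lam a = legendreSym p a := ihn a han (by omega) (by omega) hnda
      have hLb : lam b = legendreSym p b := ihn b hbn (by omega) (by omega) hndb
      rw [hb, lam_mul_s12 (by omega) (by omega), hLa, hLb]
      push_cast
      rw [legendreSym.mul]

end Engine

theorem stmt_12 (p : ℕ) [Fact p.Prime] (k : ℕ) (hk : 1 ≤ k)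
    (h : |∑ n ∈ Finset.Ico 1 (p ^ k), lam n * lam (p ^ k - n)| = (p : ℤ) ^ k - 1) :
    ∀ n, 1 ≤ n → n < p ^ k → ¬ p ∣ n → lam n = legendreSym p n := by
  have hp2 : 2 ≤ p := (Fact.out : p.Prime).two_le
  have hN1 : 1 ≤ p ^ k := Nat.one_le_pow _ _ (by omega)
  have hcard : ((Finset.Ico 1 (p ^ k)).card : ℤ) = (p : ℤ) ^ k - 1 := by
    rw [Nat.card_Ico]
    push_cast [hN1]
    ring
  have hnonneg : (0 : ℤ) ≤ (p : ℤ) ^ k - 1 := by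
    have : ((1 : ℕ) : ℤ) ≤ ((p ^ k : ℕ) : ℤ) := by exact_mod_cast hN1
    push_cast at this
    linarith
  have hpm : ∀ i ∈ Finset.Ico 1 (p ^ k),
      lam i * lam (p ^ k - i) = 1 ∨ lam i * lam (p ^ k - i) = -1 := by
    intro i _
    rcases lam_pm i with h1 | h1 <;> rcases lam_pm (p ^ k - i) with h2 | h2 <;>
      rw [h1, h2] <;> norm_num
  rcases (abs_eq hnonneg).mp h with hS | hS
  · apply engine k hk (Or.inl rfl)
    intro m h1 h2
    have hsum : ∑ n ∈ Finset.Ico 1 (p ^ k), (1 - lam n * lam (p ^ k - n)) = 0 := by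
      rw [Finset.sum_sub_distrib, Finset.sum_const, nsmul_eq_mul, mul_one, hcard, hS]
      ring
    have hterm := (Finset.sum_eq_zero_iff_of_nonneg ?_).mp hsum m
      (Finset.mem_Ico.mpr ⟨h1, h2⟩)
    · linarith
    · intro i hi
      rcases hpm i hi with hc | hc <;> rw [hc] <;> norm_num
  · apply engine k hk (Or.inr rfl)
    intro m h1 h2
    have hsum : ∑ n ∈ Finset.Ico 1 (p ^ k), (lam n * lam (p ^ k - n) + 1) = 0 := by
      rw [Finset.sum_add_distrib, Finset.sum_const, nsmul_eq_mul, mul_one, hcard, hS]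
      ring
    have hterm := (Finset.sum_eq_zero_iff_of_nonneg ?_).mp hsum m
      (Finset.mem_Ico.mpr ⟨h1, h2⟩)
    · linarith
    · intro i hi
      rcases hpm i hi with hc | hc <;> rw [hc] <;> norm_num
end

section
/- Let p be prime with |∑_{1 ≤ n < p} λ(n)λ(p−n)| = p − 1, and let q < p be prime. Then λ(m)·λ(m + jp) = +1 for every 0 ≤ j < q and 1 ≤ m < p with m ≡ −jp (mod q). -/
open Finset

/-
The hypothesis forces every product `λ(n) λ(p - n)` with `0 < n < p` to equal `ε = λ(p - 1)`, so
`λ(p - n) = ε λ(n)`. From this reflection, strong induction on `0 < a < p` gives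
`λ(a x mod p) = λ(a) λ(x)` for all `0 < x < p`. For `a = q > 1`, Dirichlet's approximation theorem
gives `0 < b < q` with `r = b x mod p` within `p / q` of `0` or of `p`. In the first case `q r < p`;
in the second, `q r mod p = p - q (p - r)` and two reflections give `λ(q r mod p) = λ(q) λ(r)`.
Since `q r ≡ b (q x)` and the claim holds for `b` by induction, cancelling `λ(b)` gives it for `q`.
Finally, if `m + j p = q k` then `m = q k mod p`, so `λ(m) = λ(q) λ(k) = λ(m + j p)`.
-/

def IsMulModAt {M : Type*} [Mul M] (f : ℕ → M) (p a : ℕ) : Prop :=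
  ∀ x, 0 < x → x < p → f (a * x % p) = f a * f x

theorem Nat.Prime.mul_mod_pos {p a x : ℕ} (hp : p.Prime) (ha0 : 0 < a) (hap : a < p)
    (hx0 : 0 < x) (hxp : x < p) : 0 < a * x % p := by
  refine Nat.pos_of_ne_zero fun h ↦ ?_
  rcases hp.dvd_mul.mp (Nat.dvd_of_mod_eq_zero h) with h | h
  · exact Nat.not_dvd_of_pos_of_lt ha0 hap h
  · exact Nat.not_dvd_of_pos_of_lt hx0 hxp h

theorem Nat.exists_mul_mod_near_zero {p q : ℕ} (hq : 0 < q) (hqp : ¬ q ∣ p) (k : ℕ) :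
    ∃ b, 0 < b ∧ b < q ∧ (q * (b * k % p) < p ∨ q * (p - b * k % p) < p) := by
  have hp : 0 < p := Nat.pos_of_ne_zero fun hp ↦ hqp (hp ▸ dvd_zero q)
  have hq1 : 0 < q - 1 := by
    have : q ≠ 1 := fun hq ↦ hqp (hq ▸ one_dvd p)
    omega
  obtain ⟨j, b, hb0, hbq, happrox⟩ := Real.exists_int_int_abs_mul_sub_le ((k : ℝ) / p) hq1
  lift b to ℕ using hb0.le
  set t : ℤ := b * k - j * p with ht
  have hqt : q * |t| < p := by
    have hle : (q : ℝ) * |(t : ℝ)| ≤ p := by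
      have hcast : ((q - 1 : ℕ) : ℝ) + 1 = q := by push_cast [Nat.cast_sub hq]; ring
      have e : ((b : ℤ) : ℝ) * (k / p) - j = t / p := by
        rw [ht]; push_cast; field_simp
      rw [e, hcast, abs_div, Nat.abs_cast, div_le_div_iff₀ (by positivity) (by positivity)]
        at happrox
      linarith
    refine lt_of_le_of_ne (by exact_mod_cast hle) fun heq ↦ hqp ?_
    exact Int.natCast_dvd_natCast.mp ⟨|t|, heq.symm⟩
  have hmod : ((b * k % p : ℕ) : ℤ) = t % p := by
    rw [ht]; push_cast; simp
  refine ⟨b, by exact_mod_cast hb0, by omega, ?_⟩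
  set r := b * k % p
  rcases le_or_gt 0 t with ht0 | ht0
  · left
    rw [abs_of_nonneg ht0] at hqt
    rw [Int.emod_eq_of_lt ht0 (by nlinarith)] at hmod
    zify
    rwa [hmod]
  · right
    rw [abs_of_neg ht0] at hqt
    rw [← Int.add_emod_right, Int.emod_eq_of_lt (by nlinarith) (by linarith)] at hmod
    have hlt : r ≤ p := (Nat.mod_lt _ hp).le
    zify [hlt]
    rw [hmod]
    linarith

section

variable {M : Type*} [CancelCommMonoid M] {f : ℕ → M} {p : ℕ}

theorem apply_one_of_mul (hf : ∀ m n, m ≠ 0 → n ≠ 0 → f (m * n) = f m * f n) : f 1 = 1 :=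
  mul_eq_left.mp (hf 1 1 one_ne_zero one_ne_zero).symm

theorem apply_pred_mul_self_of_reflection (hf : ∀ m n, m ≠ 0 → n ≠ 0 → f (m * n) = f m * f n)
    (hrefl : ∀ n, 0 < n → n < p → f (p - n) = f (p - 1) * f n) (hp : 1 < p) :
    f (p - 1) * f (p - 1) = 1 := by
  have h := hrefl (p - 1) (by omega) (by omega)
  rwa [Nat.sub_sub_self hp.le, apply_one_of_mul hf, eq_comm] at h

theorem apply_mul_mod_of_near (hf : ∀ m n, m ≠ 0 → n ≠ 0 → f (m * n) = f m * f n)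
    (hrefl : ∀ n, 0 < n → n < p → f (p - n) = f (p - 1) * f n) {q r : ℕ} (hq : 0 < q)
    (hr0 : 0 < r) (hrp : r < p) (hnear : q * r < p ∨ q * (p - r) < p) :
    f (q * r % p) = f q * f r := by
  rcases hnear with hnear | hnear
  · rw [Nat.mod_eq_of_lt hnear, hf q r hq.ne' hr0.ne']
  have hpos : 0 < q * (p - r) := Nat.mul_pos hq (by omega)
  have hmod : q * r % p = p - q * (p - r) := by
    obtain ⟨q, rfl⟩ : ∃ q', q = q' + 1 := ⟨q - 1, by omega⟩
    have : (q + 1) * r + (q + 1) * (p - r) = p * q + p := by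
      rw [← mul_add, Nat.add_sub_cancel' hrp.le]; ring
    rw [show (q + 1) * r = p - (q + 1) * (p - r) + p * q by omega, Nat.add_mul_mod_self_left,
      Nat.mod_eq_of_lt (by omega)]
  rw [hmod, hrefl _ hpos hnear, hf q _ hq.ne' (by omega), hrefl r hr0 hrp]
  calc f (p - 1) * (f q * (f (p - 1) * f r)) = f (p - 1) * f (p - 1) * (f q * f r) := by ac_rfl
    _ = f q * f r := by rw [apply_pred_mul_self_of_reflection hf hrefl (by omega), one_mul]

theorem isMulModAt_of_forall_lt (hf : ∀ m n, m ≠ 0 → n ≠ 0 → f (m * n) = f m * f n)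
    (hrefl : ∀ n, 0 < n → n < p → f (p - n) = f (p - 1) * f n) (hp : p.Prime) {q : ℕ}
    (hq : 1 < q) (hqp : q < p) (ih : ∀ b, 0 < b → b < q → IsMulModAt f p b) :
    IsMulModAt f p q := by
  intro k hk0 hkp
  have hq_not_dvd : ¬ q ∣ p := fun h ↦ by
    rcases hp.eq_one_or_self_of_dvd q h with h | h <;> omega
  obtain ⟨b, hb0, hbq, hnear⟩ := Nat.exists_mul_mod_near_zero (by omega) hq_not_dvd k
  have hb := ih b hb0 hbq
  set r := b * k % p
  have hqr : f (q * r % p) = f q * f r :=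
    apply_mul_mod_of_near hf hrefl (by omega) (hp.mul_mod_pos hb0 (hbq.trans hqp) hk0 hkp)
      (Nat.mod_lt _ (by omega)) hnear
  apply mul_left_cancel (a := f b)
  calc f b * f (q * k % p) = f (b * (q * k % p) % p) :=
        (hb _ (hp.mul_mod_pos (by omega) hqp hk0 hkp) (Nat.mod_lt _ (by omega))).symm
    _ = f (q * r % p) := by rw [Nat.mul_mod_mod, Nat.mul_mod_mod, mul_left_comm]
    _ = f b * (f q * f k) := by rw [hqr, hb k hk0 hkp, mul_left_comm]

theorem isMulModAt_of_reflection (hf : ∀ m n, m ≠ 0 → n ≠ 0 → f (m * n) = f m * f n)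
    (hrefl : ∀ n, 0 < n → n < p → f (p - n) = f (p - 1) * f n) (hp : p.Prime) {a : ℕ}
    (ha0 : 0 < a) (hap : a < p) : IsMulModAt f p a := by
  induction a using Nat.strong_induction_on with
  | _ a ih =>
    obtain rfl | ha1 := (Nat.one_le_iff_ne_zero.mpr ha0.ne').eq_or_lt
    · intro x _ hxp
      rw [one_mul, Nat.mod_eq_of_lt hxp, apply_one_of_mul hf, one_mul]
    · exact isMulModAt_of_forall_lt hf hrefl hp ha1 hap fun b hb0 hba ↦
        ih b hba hb0 (hba.trans hap)

end

def liouvilleUnit (n : ℕ) : ℤˣ := (-1) ^ ArithmeticFunction.cardFactors n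

theorem coe_liouvilleUnit (n : ℕ) : (liouvilleUnit n : ℤ) = lam n := by
  simp [liouvilleUnit, lam]

theorem liouvilleUnit_mul (m n : ℕ) (hm : m ≠ 0) (hn : n ≠ 0) :
    liouvilleUnit (m * n) = liouvilleUnit m * liouvilleUnit n := by
  simp only [liouvilleUnit, ArithmeticFunction.cardFactors_mul hm hn, pow_add]

theorem Int.units_eq_of_abs_sum_eq_card {ι : Type*} {s : Finset ι} {u : ι → ℤˣ}
    (h : |∑ i ∈ s, (u i : ℤ)| = #s) {i j : ι} (hi : i ∈ s) (hj : j ∈ s) : u i = u j := by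
  have hsum : ∑ i ∈ s, (u i : ℤ) = ∑ _ ∈ s, 1 ∨ ∑ i ∈ s, (u i : ℤ) = ∑ _ ∈ s, -1 := by
    simpa using (abs_eq (by positivity)).mp h
  rcases hsum with hsum | hsum
  · rw [sum_eq_sum_iff_of_le fun i _ ↦ ?_] at hsum
    · exact Units.ext ((hsum i hi).trans (hsum j hj).symm)
    · rcases Int.units_eq_one_or (u i) with h | h <;> simp [h]
  · rw [eq_comm, sum_eq_sum_iff_of_le fun i _ ↦ ?_] at hsum
    · exact Units.ext ((hsum i hi).symm.trans (hsum j hj))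
    · rcases Int.units_eq_one_or (u i) with h | h <;> simp [h]

theorem liouvilleUnit_reflection {p : ℕ}
    (h : |∑ n ∈ Finset.Ico 1 p, lam n * lam (p - n)| = (p : ℤ) - 1) (n : ℕ) (hn0 : 0 < n)
    (hnp : n < p) : liouvilleUnit (p - n) = liouvilleUnit (p - 1) * liouvilleUnit n := by
  have hcard : (#(Ico 1 p) : ℤ) = p - 1 := by rw [Nat.card_Ico]; omega
  rw [← hcard] at h
  simp_rw [← coe_liouvilleUnit, ← Units.val_mul] at h
  have hconst := Int.units_eq_of_abs_sum_eq_card h (i := n) (j := 1) (mem_Ico.mpr ⟨hn0, hnp⟩)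
    (mem_Ico.mpr ⟨le_rfl, by omega⟩)
  rw [apply_one_of_mul liouvilleUnit_mul, one_mul] at hconst
  rw [← hconst, mul_right_comm, Int.units_mul_self, one_mul]

theorem stmt_17_general (p q : ℕ) (hp : p.Prime) (hqp : q < p)
    (h : |∑ n ∈ Finset.Ico 1 p, lam n * lam (p - n)| = (p : ℤ) - 1) :
    ∀ j m, j < q → 1 ≤ m → m < p → (m + j * p) % q = 0 →
      lam m * lam (m + j * p) = 1 := by
  intro j m hj hm0 hmp hmod
  obtain ⟨k, hk⟩ := Nat.dvd_of_mod_eq_zero hmod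
  have hq0 : 0 < q := Nat.pos_of_ne_zero fun hq ↦ by simp only [hq, zero_mul] at hk; omega
  have hk0 : 0 < k := Nat.pos_of_ne_zero fun hk0 ↦ by simp only [hk0, mul_zero] at hk; omega
  have hkp : k < p := by
    refine Nat.lt_of_mul_lt_mul_left (a := q) ?_
    rw [← hk]
    nlinarith
  have hm : q * k % p = m := by rw [← hk, Nat.add_mul_mod_self_right, Nat.mod_eq_of_lt hmp]
  have hmul := isMulModAt_of_reflection liouvilleUnit_mul (liouvilleUnit_reflection h) hp hq0
    hqp k hk0 hkp
  rw [hm] at hmul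
  rw [← coe_liouvilleUnit, ← coe_liouvilleUnit, hk, hmul, liouvilleUnit_mul q k hq0.ne' hk0.ne',
    ← Units.val_mul, Int.units_mul_self, Units.val_one]

theorem stmt_17 (p q : ℕ) (hp : p.Prime) (hq : q.Prime) (hqp : q < p)
    (h : |∑ n ∈ Finset.Ico 1 p, lam n * lam (p - n)| = (p : ℤ) - 1) :
    ∀ j m, j < q → 1 ≤ m → m < p → (m + j * p) % q = 0 →
      lam m * lam (m + j * p) = 1 :=
  stmt_17_general p q hp hqp h
end
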